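/- arXiv:2004.00544 — 3 statements merged into one kernel-verified Lean document; each statement's English description precedes it below -/
import Mathlib

section
/- Let N ≥ 1 and let α : Fin N → ℕ satisfy α i ≥ 1 for all i, and suppose α j ≥ 2 for some index j. Phase space consists of pairs (Q, P) where Q, P : Π i, Fin (α i) → ℝ. Let χ : (Π i, Fin (α i) → ℝ) → (Fin N → ℝ) → (Fin N → ℝ) and L : (Π i, Fin (α i) → ℝ) → (Fin N → ℝ) → ℝ be arbitrary functions, and write Pᵗᵒᵖ for the family i ↦ P i (α i − 1) of highest momenta. Define H(Q, P) = Σᵢ Σ_{k : k+1 < α i} (P i k)·(Q i (k+1)) + Σᵢ (P i (α i − 1))·(χ Q Pᵗᵒᵖ i) − L Q (χ Q Pᵗᵒᵖ). Then H is unbounded below and unbounded above on phase space. -/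
open Finset in
/-- The Ostrogradsky canonical Hamiltonian for `N` degrees of freedom where the
Lagrangian depends on derivatives of `qᵢ` up to order `αᵢ`:
`H(Q,P) = Σᵢ Σ_{k+1 < αᵢ} Pᵢᵏ·Qᵢᵏ⁺¹ + Σᵢ Pᵢ^{αᵢ−1}·χᵢ(Q, Pᵗᵒᵖ) − L(Q, χ(Q, Pᵗᵒᵖ))`. -/
noncomputable def ostrogradskyHamiltonian (N : ℕ) (α : Fin N → ℕ) (hα : ∀ i, 1 ≤ α i)
    (χ : (∀ i, Fin (α i) → ℝ) → (Fin N → ℝ) → (Fin N → ℝ))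
    (L : (∀ i, Fin (α i) → ℝ) → (Fin N → ℝ) → ℝ)
    (Q P : ∀ i, Fin (α i) → ℝ) : ℝ :=
  (∑ i, ∑ k : Fin (α i),
      if h : (k : ℕ) + 1 < α i then P i k * Q i ⟨(k : ℕ) + 1, h⟩ else 0)
  + (∑ i, P i ⟨α i - 1, Nat.sub_lt (lt_of_lt_of_le Nat.zero_lt_one (hα i)) Nat.one_pos⟩
        * χ Q (fun j => P j ⟨α j - 1, Nat.sub_lt (lt_of_lt_of_le Nat.zero_lt_one (hα j)) Nat.one_pos⟩) i)
  - L Q (fun j => P j ⟨α j - 1, Nat.sub_lt (lt_of_lt_of_le Nat.zero_lt_one (hα j)) Nat.one_pos⟩)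

/-!
A lower momentum `P_j^m` (`m + 1 < α j`) is never a top momentum, so `χ` and `L` do not see it:
it enters `H` only through the term `P_j^m · Q_j^{m+1}`. Fixing `Q_j^{m+1} ≠ 0`, the Hamiltonian is
therefore an affine function of `P_j^m` with nonzero slope and takes every real value.
-/

section

variable {N : ℕ} {α : Fin N → ℕ}

def lowerMomentumPairing (Q P : ∀ i, Fin (α i) → ℝ) : ℝ :=
  ∑ i, ∑ k : Fin (α i), if h : (k : ℕ) + 1 < α i then P i k * Q i ⟨(k : ℕ) + 1, h⟩ else 0

theorem lowerMomentumPairing_add (Q P δ : ∀ i, Fin (α i) → ℝ) :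
    lowerMomentumPairing Q (P + δ) = lowerMomentumPairing Q P + lowerMomentumPairing Q δ := by
  simp only [lowerMomentumPairing, ← Finset.sum_add_distrib]
  refine Finset.sum_congr rfl fun i _ => Finset.sum_congr rfl fun k _ => ?_
  split_ifs <;> simp [add_mul]

theorem lowerMomentumPairing_single (Q : ∀ i, Fin (α i) → ℝ) (j : Fin N) (m : ℕ)
    (hm : m + 1 < α j) (t : ℝ) :
    lowerMomentumPairing Q (fun i k => if i = j ∧ (k : ℕ) = m then t else 0) =
      t * Q j ⟨m + 1, hm⟩ := by
  rw [lowerMomentumPairing, Finset.sum_eq_single j, Finset.sum_eq_single ⟨m, by omega⟩]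
  · simp [hm]
  · intro k _ hk
    have : (k : ℕ) ≠ m := fun h => hk (Fin.ext h)
    simp [this]
  · simp
  · intro i _ hi
    simp [hi]
  · simp

variable (hα : ∀ i, 1 ≤ α i)
  (χ : (∀ i, Fin (α i) → ℝ) → (Fin N → ℝ) → (Fin N → ℝ))
  (L : (∀ i, Fin (α i) → ℝ) → (Fin N → ℝ) → ℝ)

theorem ostrogradskyHamiltonian_add_of_top_eq_zero (Q P δ : ∀ i, Fin (α i) → ℝ)
    (hδ : ∀ i h, δ i ⟨α i - 1, h⟩ = 0) :
    ostrogradskyHamiltonian N α hα χ L Q (P + δ) =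
      ostrogradskyHamiltonian N α hα χ L Q P + lowerMomentumPairing Q δ := by
  have htop : ∀ i h, (P + δ) i ⟨α i - 1, h⟩ = P i ⟨α i - 1, h⟩ := by
    simp [hδ]
  change lowerMomentumPairing Q (P + δ) + _ - _ = lowerMomentumPairing Q P + _ - _ + _
  simp only [htop, lowerMomentumPairing_add]
  ring

theorem ostrogradskyHamiltonian_add_lowerMomentum (Q P : ∀ i, Fin (α i) → ℝ)
    (j : Fin N) (m : ℕ) (hm : m + 1 < α j) (t : ℝ) :
    ostrogradskyHamiltonian N α hα χ L Q
        (P + fun i (k : Fin (α i)) => if i = j ∧ (k : ℕ) = m then t else 0) =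
      ostrogradskyHamiltonian N α hα χ L Q P + t * Q j ⟨m + 1, hm⟩ := by
  rw [ostrogradskyHamiltonian_add_of_top_eq_zero, lowerMomentumPairing_single]
  rintro i h
  rw [if_neg]
  rintro ⟨rfl, htop_eq⟩
  simp only at htop_eq
  omega

theorem ostrogradskyHamiltonian_surjective_of_ne_zero (Q : ∀ i, Fin (α i) → ℝ)
    (j : Fin N) (m : ℕ) (hm : m + 1 < α j) (hQ : Q j ⟨m + 1, hm⟩ ≠ 0) :
    Function.Surjective (ostrogradskyHamiltonian N α hα χ L Q) := by
  intro c
  set H₀ := ostrogradskyHamiltonian N α hα χ L Q 0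
  refine ⟨_, (ostrogradskyHamiltonian_add_lowerMomentum hα χ L Q 0 j m hm
    ((c - H₀) / Q j ⟨m + 1, hm⟩)).trans ?_⟩
  field_simp
  ring

end

theorem ostrogradsky_unbounded_general (N : ℕ) (α : Fin N → ℕ)
    (hα : ∀ i, 1 ≤ α i) (j : Fin N) (hj : 2 ≤ α j)
    (χ : (∀ i, Fin (α i) → ℝ) → (Fin N → ℝ) → (Fin N → ℝ))
    (L : (∀ i, Fin (α i) → ℝ) → (Fin N → ℝ) → ℝ) :
    ∀ M : ℝ,
      (∃ Q P : ∀ i, Fin (α i) → ℝ, ostrogradskyHamiltonian N α hα χ L Q P < M) ∧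
      (∃ Q P : ∀ i, Fin (α i) → ℝ, ostrogradskyHamiltonian N α hα χ L Q P > M) := by
  intro M
  have hsurj := ostrogradskyHamiltonian_surjective_of_ne_zero hα χ L (fun _ _ => 1) j 0 hj
    one_ne_zero
  obtain ⟨Plo, hlo⟩ := hsurj (M - 1)
  obtain ⟨Phi, hhi⟩ := hsurj (M + 1)
  exact ⟨⟨_, Plo, by linarith⟩, ⟨_, Phi, by linarith⟩⟩

/-- Ostrogradsky's instability theorem for `N ≥ 1` degrees of freedom, with
derivative orders `α i ≥ 1` and at least one `α j ≥ 2`: the canonical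
Hamiltonian is unbounded below and unbounded above on phase space. -/
theorem ostrogradsky_unbounded (N : ℕ) (hN : 1 ≤ N) (α : Fin N → ℕ)
    (hα : ∀ i, 1 ≤ α i) (j : Fin N) (hj : 2 ≤ α j)
    (χ : (∀ i, Fin (α i) → ℝ) → (Fin N → ℝ) → (Fin N → ℝ))
    (L : (∀ i, Fin (α i) → ℝ) → (Fin N → ℝ) → ℝ) :
    ∀ M : ℝ,
      (∃ Q P : ∀ i, Fin (α i) → ℝ, ostrogradskyHamiltonian N α hα χ L Q P < M) ∧
      (∃ Q P : ∀ i, Fin (α i) → ℝ, ostrogradskyHamiltonian N α hα χ L Q P > M) :=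
  ostrogradsky_unbounded_general N α hα j hj χ L
end

section
/- Let N ≥ 1 and α ≥ 2. Let Q ∈ (Fin N → Fin α → ℝ) denote configuration variables and P ∈ (Fin N → Fin α → ℝ) their conjugate momenta. Let 𝒬 : (Fin N → Fin α → ℝ) → Fin N → Fin α → ℝ, v : (Fin N → Fin α → ℝ) → (Fin N → ℝ) → (Fin N → ℝ), and L : (Fin N → Fin α → ℝ) → (Fin N → ℝ) → ℝ be arbitrary functions, and write Pᵗᵒᵖ for the family i ↦ P i (α − 1). Define H(Q, P) = Σᵢ Σ_{β ≤ α − 2} (P i β)·(𝒬 Q i β) + Σᵢ (P i (α − 1))·(v Q Pᵗᵒᵖ i) − L Q (v Q Pᵗᵒᵖ). If there exist an index j, an index γ ≤ α − 2 and a configuration Q* with 𝒬 Q* j γ ≠ 0, then H is unbounded below and unbounded above. -/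
/-!
Along the line of momenta `P = c · e_{jγ}` at the configuration `Q*`, only the lower momentum
`P_j^γ` is switched on: the top momenta vanish, so the velocity term drops out, the Lagrangian
is frozen at `L(Q*, 0)`, and the Hamiltonian reduces to the affine function
`c ↦ c · 𝒬_j^γ(Q*) − L(Q*, 0)`. Its slope is nonzero, so it takes every real value.
-/

open Finset in
/-- The constrained canonical Hamiltonian in the generalized coordinates of the
second formulation of Ostrogradsky's theorem:
`H(Q,P) = Σᵢ Σ_{β ≤ α−2} Pᵢᵝ·𝒬ᵢᵝ(Q) + Σᵢ Pᵢ^{α−1}·vᵢ(Q, Pᵗᵒᵖ) − L(Q, v(Q, Pᵗᵒᵖ))`. -/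
noncomputable def constrainedHamiltonian (N α : ℕ) (hα : 2 ≤ α)
    (𝒬 : (Fin N → Fin α → ℝ) → Fin N → Fin α → ℝ)
    (v : (Fin N → Fin α → ℝ) → (Fin N → ℝ) → (Fin N → ℝ))
    (L : (Fin N → Fin α → ℝ) → (Fin N → ℝ) → ℝ)
    (Q P : Fin N → Fin α → ℝ) : ℝ :=
  (∑ i, ∑ β : Fin α, if (β : ℕ) ≤ α - 2 then P i β * 𝒬 Q i β else 0)
  + (∑ i, P i ⟨α - 1, by omega⟩ * v Q (fun j => P j ⟨α - 1, by omega⟩) i)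
  - L Q (fun j => P j ⟨α - 1, by omega⟩)

section

variable {N α : ℕ} (hα : 2 ≤ α)
  (𝒬 : (Fin N → Fin α → ℝ) → Fin N → Fin α → ℝ)
  (v : (Fin N → Fin α → ℝ) → (Fin N → ℝ) → (Fin N → ℝ))
  (L : (Fin N → Fin α → ℝ) → (Fin N → ℝ) → ℝ)

lemma constrainedHamiltonian_single_lower_momentum (Q : Fin N → Fin α → ℝ)
    (j : Fin N) (γ : Fin α) (hγ : (γ : ℕ) ≤ α - 2) (c : ℝ) :
    constrainedHamiltonian N α hα 𝒬 v L Q (Pi.single j (Pi.single γ c))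
      = c * 𝒬 Q j γ - L Q 0 := by
  have hγ_ne_top : (⟨α - 1, by omega⟩ : Fin α) ≠ γ := Fin.ne_of_val_ne (by dsimp only; omega)
  have htop : ∀ i, Pi.single (M := fun _ : Fin N => Fin α → ℝ) j (Pi.single γ c) i
      ⟨α - 1, by omega⟩ = 0 := by
    intro i
    rcases eq_or_ne i j with rfl | hij
    · simp [hγ_ne_top]
    · simp [hij]
  have hlower : (∑ i, ∑ β : Fin α, if (β : ℕ) ≤ α - 2 then
      Pi.single (M := fun _ : Fin N => Fin α → ℝ) j (Pi.single γ c) i β * 𝒬 Q i β else 0)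
      = c * 𝒬 Q j γ := by
    rw [Fintype.sum_eq_single j fun i hij => by simp [hij],
      Fintype.sum_eq_single γ fun β hβγ => by simp [hβγ]]
    simp [hγ]
  unfold constrainedHamiltonian
  simp only [hlower, htop, zero_mul, Finset.sum_const_zero, add_zero]
  rfl

lemma surjective_constrainedHamiltonian_single_lower_momentum (Q : Fin N → Fin α → ℝ)
    (j : Fin N) (γ : Fin α) (hγ : (γ : ℕ) ≤ α - 2) (hQ : 𝒬 Q j γ ≠ 0) :
    Function.Surjective fun c : ℝ =>
      constrainedHamiltonian N α hα 𝒬 v L Q (Pi.single j (Pi.single γ c)) := by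
  intro y
  refine ⟨(y + L Q 0) / 𝒬 Q j γ, ?_⟩
  dsimp only
  rw [constrainedHamiltonian_single_lower_momentum hα 𝒬 v L Q j γ hγ, div_mul_cancel₀ _ hQ]
  ring

end

theorem constrained_ostrogradsky_unbounded_general (N α : ℕ) (hα : 2 ≤ α)
    (𝒬 : (Fin N → Fin α → ℝ) → Fin N → Fin α → ℝ)
    (v : (Fin N → Fin α → ℝ) → (Fin N → ℝ) → (Fin N → ℝ))
    (L : (Fin N → Fin α → ℝ) → (Fin N → ℝ) → ℝ)
    (j : Fin N) (γ : Fin α) (hγ : (γ : ℕ) ≤ α - 2)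
    (Qstar : Fin N → Fin α → ℝ) (hQ : 𝒬 Qstar j γ ≠ 0) :
    ∀ M : ℝ,
      (∃ Q P : Fin N → Fin α → ℝ, constrainedHamiltonian N α hα 𝒬 v L Q P < M) ∧
      (∃ Q P : Fin N → Fin α → ℝ, constrainedHamiltonian N α hα 𝒬 v L Q P > M) := by
  intro M
  have hsurj := surjective_constrainedHamiltonian_single_lower_momentum hα 𝒬 v L Qstar j γ hγ hQ
  obtain ⟨cLow, hcLow⟩ := hsurj (M - 1)
  obtain ⟨cHigh, hcHigh⟩ := hsurj (M + 1)
  exact ⟨⟨Qstar, _, hcLow ▸ sub_one_lt M⟩, ⟨Qstar, _, hcHigh ▸ lt_add_one M⟩⟩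

/-- Ostrogradsky's instability theorem in the second canonical formulation: if
some velocity function `𝒬 Q* j γ` with `γ ≤ α − 2` is nonzero at some
configuration `Q*`, then the constrained canonical Hamiltonian is unbounded
below and unbounded above. -/
theorem constrained_ostrogradsky_unbounded (N α : ℕ) (hN : 1 ≤ N) (hα : 2 ≤ α)
    (𝒬 : (Fin N → Fin α → ℝ) → Fin N → Fin α → ℝ)
    (v : (Fin N → Fin α → ℝ) → (Fin N → ℝ) → (Fin N → ℝ))
    (L : (Fin N → Fin α → ℝ) → (Fin N → ℝ) → ℝ)
    (j : Fin N) (γ : Fin α) (hγ : (γ : ℕ) ≤ α - 2)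
    (Qstar : Fin N → Fin α → ℝ) (hQ : 𝒬 Qstar j γ ≠ 0) :
    ∀ M : ℝ,
      (∃ Q P : Fin N → Fin α → ℝ, constrainedHamiltonian N α hα 𝒬 v L Q P < M) ∧
      (∃ Q P : Fin N → Fin α → ℝ, constrainedHamiltonian N α hα 𝒬 v L Q P > M) :=
  constrained_ostrogradsky_unbounded_general N α hα 𝒬 v L j γ hγ Qstar hQ
end

section
/- Suppose g is twice continuously differentiable and A is continuously differentiable. Define F_{μν} = ∂_μ A_ν − ∂_ν A_μ and E_{μν} = ∇_μ A_ν + ∇_ν A_μ + 4·A_μ A_ν. Then the Ricci tensor of the Weyl connection and the Ricci tensor of the Levi–Civita connection are related, at every point of ℝ⁴ and for all indices μ, ν, by Ric[Γ̄]_{μν} = Ric[Γ]_{μν} + ½·g_{μν}·(∇^λ A_λ − A^λ A_λ) − (3/2)·A_μ A_ν − F_{μν} + ½·E_{μν}. -/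
open Finset

/-- Directional (partial) derivative along the `μ`-th standard basis vector of `ℝ⁴`. -/
noncomputable def pderiv4 (μ : Fin 4) (f : (Fin 4 → ℝ) → ℝ) (x : Fin 4 → ℝ) : ℝ :=
  fderiv ℝ f x (Pi.single μ 1)

/-- Christoffel symbols `Γ^λ_{μν}` of a metric `g` on `ℝ⁴`:
`Γ^λ_{μν} = ½ Σ_σ (g⁻¹)^{λσ} (∂_μ g_{νσ} + ∂_ν g_{μσ} − ∂_σ g_{μν})`. -/
noncomputable def christoffel (g : (Fin 4 → ℝ) → Matrix (Fin 4) (Fin 4) ℝ)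
    (x : Fin 4 → ℝ) (l μ ν : Fin 4) : ℝ :=
  (1 / 2) * ∑ σ, (g x)⁻¹ l σ *
    (pderiv4 μ (fun y => g y ν σ) x + pderiv4 ν (fun y => g y μ σ) x
      - pderiv4 σ (fun y => g y μ ν) x)

/-- Weyl connection coefficients
`Γ̄^λ_{μν} = Γ^λ_{μν} − ½ Σ_σ (g⁻¹)^{λσ} (A_μ g_{νσ} + A_ν g_{μσ} − A_σ g_{μν})`. -/
noncomputable def weylConn (g : (Fin 4 → ℝ) → Matrix (Fin 4) (Fin 4) ℝ)
    (A : (Fin 4 → ℝ) → Fin 4 → ℝ) (x : Fin 4 → ℝ) (l μ ν : Fin 4) : ℝ :=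
  christoffel g x l μ ν - (1 / 2) * ∑ σ, (g x)⁻¹ l σ *
    (A x μ * g x ν σ + A x ν * g x μ σ - A x σ * g x μ ν)

/-- Riemann tensor of connection coefficients `C`:
`Riem[C]^λ_{μσν} = ∂_σ C^λ_{νμ} − ∂_ν C^λ_{σμ}
+ Σ_α (C^λ_{ασ} C^α_{νμ} − C^λ_{αν} C^α_{σμ})`. -/
noncomputable def riemann (C : (Fin 4 → ℝ) → Fin 4 → Fin 4 → Fin 4 → ℝ)
    (x : Fin 4 → ℝ) (l μ σ ν : Fin 4) : ℝ :=
  pderiv4 σ (fun y => C y l ν μ) x - pderiv4 ν (fun y => C y l σ μ) x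
    + ∑ a, (C x l a σ * C x a ν μ - C x l a ν * C x a σ μ)

/-- Ricci tensor `Ric[C]_{μν} = Σ_λ Riem[C]^λ_{μλν}`. -/
noncomputable def ricci (C : (Fin 4 → ℝ) → Fin 4 → Fin 4 → Fin 4 → ℝ)
    (x : Fin 4 → ℝ) (μ ν : Fin 4) : ℝ :=
  ∑ l, riemann C x l μ l ν

/-- Scalar curvature `Scal[C] = Σ_{μ,ν} (g⁻¹)^{μν} Ric[C]_{μν}`. -/
noncomputable def scalarCurv (g : (Fin 4 → ℝ) → Matrix (Fin 4) (Fin 4) ℝ)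
    (C : (Fin 4 → ℝ) → Fin 4 → Fin 4 → Fin 4 → ℝ) (x : Fin 4 → ℝ) : ℝ :=
  ∑ μ, ∑ ν, (g x)⁻¹ μ ν * ricci C x μ ν

/-- Levi–Civita covariant derivative of the Weyl field:
`∇_μ A_ν = ∂_μ A_ν − Σ_σ Γ^σ_{μν} A_σ`. -/
noncomputable def covDerivA (g : (Fin 4 → ℝ) → Matrix (Fin 4) (Fin 4) ℝ)
    (A : (Fin 4 → ℝ) → Fin 4 → ℝ) (x : Fin 4 → ℝ) (μ ν : Fin 4) : ℝ :=
  pderiv4 μ (fun y => A y ν) x - ∑ σ, christoffel g x σ μ ν * A x σ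

/-- The divergence `∇^λ A_λ = Σ_{λ,μ} (g⁻¹)^{μλ} ∇_μ A_λ`. -/
noncomputable def divA (g : (Fin 4 → ℝ) → Matrix (Fin 4) (Fin 4) ℝ)
    (A : (Fin 4 → ℝ) → Fin 4 → ℝ) (x : Fin 4 → ℝ) : ℝ :=
  ∑ l, ∑ μ, (g x)⁻¹ μ l * covDerivA g A x μ l

/-- The squared norm `A^λ A_λ = Σ_{λ,μ} (g⁻¹)^{λμ} A_λ A_μ`. -/
noncomputable def normSqA (g : (Fin 4 → ℝ) → Matrix (Fin 4) (Fin 4) ℝ)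
    (A : (Fin 4 → ℝ) → Fin 4 → ℝ) (x : Fin 4 → ℝ) : ℝ :=
  ∑ l, ∑ μ, (g x)⁻¹ l μ * A x l * A x μ

/-!
The Weyl connection is `Γ̄ = Γ − T` with `T^λ_{μν} = ½ (δ^λ_ν A_μ + δ^λ_μ A_ν − g_{μν} A^λ)`.
The Ricci tensor of a difference of connections is `Ric[Γ]` plus first derivatives of `T`, terms
bilinear in `Γ` and `T`, and terms quadratic in `T`. All contractions of `T` are explicit
(`T^λ_{λμ} = 2 A_μ` in dimension four), and metric compatibility `∂g = Γᵀ g + g Γ`, together with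
`∂(g⁻¹) = −g⁻¹ (∂g) g⁻¹`, absorbs the bilinear terms and the divergence of `A^λ` into the
Levi–Civita derivatives `∇_μ A_ν` and `∇^λ A_λ`.
-/

open Matrix

section MatrixCalculus

variable {E n : Type*} [NormedAddCommGroup E] [NormedSpace ℝ E] [Fintype n] [DecidableEq n]

theorem differentiable_det {M : E → Matrix n n ℝ}
    (hM : ∀ i j, Differentiable ℝ fun x => M x i j) :
    Differentiable ℝ fun x => (M x).det := by
  simp only [Matrix.det_apply']
  fun_prop

theorem differentiable_inv_apply {M : E → Matrix n n ℝ}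
    (hM : ∀ i j, Differentiable ℝ fun x => M x i j) (hdet : ∀ x, IsUnit (M x).det) (i j : n) :
    Differentiable ℝ fun x => (M x)⁻¹ i j := by
  simp only [Matrix.inv_def, Matrix.smul_apply, Ring.inverse_eq_inv', smul_eq_mul,
    Matrix.adjugate_apply]
  refine ((differentiable_det hM).inv fun x => (hdet x).ne_zero).mul (differentiable_det ?_)
  intro a b
  simp only [Matrix.updateRow_apply]
  split_ifs <;> fun_prop

end MatrixCalculus

section PartialDerivative

variable {f h : (Fin 4 → ℝ) → ℝ} {x : Fin 4 → ℝ}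

theorem pderiv4_const (c : ℝ) (μ : Fin 4) (x : Fin 4 → ℝ) : pderiv4 μ (fun _ => c) x = 0 := by
  simp [pderiv4]

theorem pderiv4_add (hf : DifferentiableAt ℝ f x) (hh : DifferentiableAt ℝ h x) (μ : Fin 4) :
    pderiv4 μ (fun y => f y + h y) x = pderiv4 μ f x + pderiv4 μ h x := by
  simp [pderiv4, fderiv_fun_add hf hh]

theorem pderiv4_sub (hf : DifferentiableAt ℝ f x) (hh : DifferentiableAt ℝ h x) (μ : Fin 4) :
    pderiv4 μ (fun y => f y - h y) x = pderiv4 μ f x - pderiv4 μ h x := by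
  simp [pderiv4, fderiv_fun_sub hf hh]

theorem pderiv4_mul (hf : DifferentiableAt ℝ f x) (hh : DifferentiableAt ℝ h x) (μ : Fin 4) :
    pderiv4 μ (fun y => f y * h y) x = pderiv4 μ f x * h x + f x * pderiv4 μ h x := by
  simp only [pderiv4, fderiv_fun_mul hf hh, _root_.add_apply, _root_.smul_apply, smul_eq_mul]
  ring

theorem pderiv4_const_mul (c : ℝ) (hf : DifferentiableAt ℝ f x) (μ : Fin 4) :
    pderiv4 μ (fun y => c * f y) x = c * pderiv4 μ f x := by
  simp [pderiv4, fderiv_const_mul hf c]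

theorem pderiv4_mul_const (c : ℝ) (hf : DifferentiableAt ℝ f x) (μ : Fin 4) :
    pderiv4 μ (fun y => f y * c) x = pderiv4 μ f x * c := by
  simp only [pderiv4, fderiv_mul_const hf c, _root_.smul_apply, smul_eq_mul]
  ring

theorem pderiv4_div_const (c : ℝ) (hf : DifferentiableAt ℝ f x) (μ : Fin 4) :
    pderiv4 μ (fun y => f y / c) x = pderiv4 μ f x / c := by
  simpa only [div_eq_mul_inv] using pderiv4_mul_const c⁻¹ hf μ

theorem pderiv4_sum {ι : Type*} {s : Finset ι} {F : ι → (Fin 4 → ℝ) → ℝ}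
    (hF : ∀ i ∈ s, DifferentiableAt ℝ (F i) x) (μ : Fin 4) :
    pderiv4 μ (fun y => ∑ i ∈ s, F i y) x = ∑ i ∈ s, pderiv4 μ (F i) x := by
  simp [pderiv4, fderiv_fun_sum hF]

theorem ContDiff.differentiable_pderiv4 (hf : ContDiff ℝ 2 f) (μ : Fin 4) :
    Differentiable ℝ (pderiv4 μ f) :=
  ((hf.fderiv_right (m := 1) (by norm_num)).clm_apply contDiff_const).differentiable
    one_ne_zero

end PartialDerivative

theorem ricci_sub {C T : (Fin 4 → ℝ) → Fin 4 → Fin 4 → Fin 4 → ℝ} {x : Fin 4 → ℝ}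
    (hC : ∀ l m n, DifferentiableAt ℝ (fun y => C y l m n) x)
    (hT : ∀ l m n, DifferentiableAt ℝ (fun y => T y l m n) x) (μ ν : Fin 4) :
    ricci (C - T) x μ ν
      = ricci C x μ ν + ∑ l, pderiv4 ν (fun y => T y l l μ) x
        - ∑ l, pderiv4 l (fun y => T y l ν μ) x
        + ∑ l, ∑ c, (C x l c ν * T x c l μ + T x l c ν * C x c l μ
            - C x l c l * T x c ν μ - T x l c l * C x c ν μ)
        + ∑ l, ∑ c, (T x l c l * T x c ν μ - T x l c ν * T x c l μ) := by
  simp only [ricci, riemann, Pi.sub_apply, pderiv4_sub (hC _ _ _) (hT _ _ _), sub_mul, mul_sub,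
    Finset.sum_add_distrib, Finset.sum_sub_distrib]
  ring

noncomputable def pderivMatrix (μ : Fin 4) (M : (Fin 4 → ℝ) → Matrix (Fin 4) (Fin 4) ℝ)
    (x : Fin 4 → ℝ) : Matrix (Fin 4) (Fin 4) ℝ :=
  Matrix.of fun i j => pderiv4 μ (fun y => M y i j) x

theorem pderivMatrix_mul {M N : (Fin 4 → ℝ) → Matrix (Fin 4) (Fin 4) ℝ} {x : Fin 4 → ℝ}
    (hM : ∀ i j, DifferentiableAt ℝ (fun y => M y i j) x)
    (hN : ∀ i j, DifferentiableAt ℝ (fun y => N y i j) x) (μ : Fin 4) :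
    pderivMatrix μ (fun y => M y * N y) x
      = pderivMatrix μ M x * N x + M x * pderivMatrix μ N x := by
  ext i j
  simp only [pderivMatrix, Matrix.of_apply, Matrix.mul_apply, Matrix.add_apply]
  rw [pderiv4_sum fun k _ => (hM i k).fun_mul (hN k j), ← Finset.sum_add_distrib]
  exact Finset.sum_congr rfl fun k _ => pderiv4_mul (hM i k) (hN k j) μ

theorem pderivMatrix_inv {M : (Fin 4 → ℝ) → Matrix (Fin 4) (Fin 4) ℝ}
    (hM : ∀ i j, Differentiable ℝ fun y => M y i j) (hdet : ∀ y, IsUnit (M y).det)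
    (μ : Fin 4) (x : Fin 4 → ℝ) :
    pderivMatrix μ (fun y => (M y)⁻¹) x = -((M x)⁻¹ * pderivMatrix μ M x * (M x)⁻¹) := by
  have hconst : pderivMatrix μ (fun y => (M y)⁻¹ * M y) x = 0 := by
    ext i j
    simp [pderivMatrix, Matrix.nonsing_inv_mul _ (hdet _), Matrix.one_apply, pderiv4_const]
  have hinv : ∀ i j, DifferentiableAt ℝ (fun y => (M y)⁻¹ i j) x := fun i j =>
    (differentiable_inv_apply hM hdet i j).differentiableAt
  rw [pderivMatrix_mul hinv (fun i j => (hM i j).differentiableAt), add_eq_zero_iff_eq_neg]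
    at hconst
  calc pderivMatrix μ (fun y => (M y)⁻¹) x
      = pderivMatrix μ (fun y => (M y)⁻¹) x * M x * (M x)⁻¹ := by
        rw [Matrix.mul_assoc, Matrix.mul_nonsing_inv _ (hdet x), Matrix.mul_one]
    _ = _ := by rw [hconst, Matrix.neg_mul]

namespace Matrix

variable {ι : Type*} [Fintype ι] [DecidableEq ι] {G : Matrix ι ι ℝ}

theorem IsSymm.vecMul_inv_mulVec (hG : G.IsSymm) (hdet : IsUnit G.det) (v : ι → ℝ) :
    (G⁻¹ *ᵥ v) ᵥ* G = v := by
  calc (G⁻¹ *ᵥ v) ᵥ* G = G *ᵥ (G⁻¹ *ᵥ v) := by rw [← vecMul_transpose G, hG.eq]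
    _ = v := by rw [mulVec_mulVec, mul_nonsing_inv _ hdet, one_mulVec]

end Matrix

section WeylTensor

variable {ι : Type*} [Fintype ι] [DecidableEq ι] (G : Matrix ι ι ℝ) (a : ι → ℝ)

noncomputable def weylTensor (l m n : ι) : ℝ :=
  (a m * (if l = n then 1 else 0) + a n * (if l = m then 1 else 0) - (G⁻¹ *ᵥ a) l * G m n) / 2

variable {G}

theorem weylTensor_symm (hG : G.IsSymm) (l m n : ι) :
    weylTensor G a l m n = weylTensor G a l n m := by
  simp only [weylTensor, hG.apply m n]
  ring

theorem sum_mul_weylTensor (W : ι → ℝ) (m n : ι) :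
    ∑ c, W c * weylTensor G a c m n
      = (a m * W n + a n * W m - (W ⬝ᵥ (G⁻¹ *ᵥ a)) * G m n) / 2 := by
  simp only [weylTensor, mul_div_assoc', ← Finset.sum_div, mul_add, mul_sub, mul_ite, mul_one,
    mul_zero, Finset.sum_add_distrib, Finset.sum_sub_distrib, Finset.sum_ite_eq', Finset.mem_univ,
    if_true, dotProduct]
  simp only [Finset.sum_mul, mul_assoc]
  ring

theorem sum_mul_weylTensor_middle (W : ι → ℝ) (c n : ι) :
    ∑ l, W l * weylTensor G a c l n
      = ((W ⬝ᵥ a) * (if c = n then 1 else 0) + a n * W c - (G⁻¹ *ᵥ a) c * (W ᵥ* G) n) / 2 := by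
  simp only [weylTensor, mul_div_assoc', ← Finset.sum_div, mul_add, mul_sub, mul_ite, mul_one,
    mul_zero, Finset.sum_add_distrib, Finset.sum_sub_distrib, Finset.sum_ite_eq, Finset.mem_univ,
    if_true, dotProduct, vecMul, mul_left_comm (W _) ((G⁻¹ *ᵥ a) c), ← Finset.mul_sum,
    Finset.sum_ite_irrel, Finset.sum_const_zero]
  split_ifs <;> ring

theorem weylTensor_trace_left (hG : G.IsSymm) (hdet : IsUnit G.det) (c : ι) :
    ∑ l, weylTensor G a l l c = Fintype.card ι / 2 * a c := by
  have h := congrFun (hG.vecMul_inv_mulVec hdet a) c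
  simp only [vecMul, dotProduct] at h
  simp only [weylTensor, ← Finset.sum_div, Finset.sum_add_distrib, Finset.sum_sub_distrib, h,
    mul_ite, mul_one, mul_zero, Finset.sum_ite_eq', Finset.mem_univ, if_true, Finset.sum_const,
    Finset.card_univ, nsmul_eq_mul]
  ring

theorem weylTensor_trace_right (hG : G.IsSymm) (hdet : IsUnit G.det) (c : ι) :
    ∑ l, weylTensor G a l c l = Fintype.card ι / 2 * a c := by
  simp only [weylTensor_symm a hG _ c, weylTensor_trace_left a hG hdet]

theorem sum_weylTensor_mul_weylTensor (hG : G.IsSymm) (hdet : IsUnit G.det) (μ ν : ι) :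
    ∑ l, ∑ c, (weylTensor G a l c l * weylTensor G a c ν μ
        - weylTensor G a l c ν * weylTensor G a c l μ)
      = (Fintype.card ι - 2) / 4 * (a μ * a ν - (a ⬝ᵥ (G⁻¹ *ᵥ a)) * G μ ν) := by
  have hraised (c : ι) : (G⁻¹ *ᵥ a) ⬝ᵥ (fun l => weylTensor G a c l μ)
      = if c = μ then (a ⬝ᵥ (G⁻¹ *ᵥ a)) / 2 else 0 := by
    rw [dotProduct, sum_mul_weylTensor_middle, hG.vecMul_inv_mulVec hdet, dotProduct_comm]
    split_ifs <;> ring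
  have hmiddle (c : ι) : ∑ l, weylTensor G a l c ν * weylTensor G a c l μ
      = (a c * weylTensor G a c ν μ + a ν * weylTensor G a c c μ) / 2
        - if c = μ then (a ⬝ᵥ (G⁻¹ *ᵥ a)) * G μ ν / 4 else 0 := by
    simp only [mul_comm (weylTensor G a _ c ν), sum_mul_weylTensor]
    rw [dotProduct_comm, hraised]
    split_ifs with h
    · subst h; ring
    · ring
  rw [Finset.sum_comm]
  simp only [Finset.sum_sub_distrib, ← Finset.sum_mul, weylTensor_trace_right a hG hdet, hmiddle,
    ← Finset.sum_div, Finset.sum_add_distrib, ← Finset.mul_sum, mul_assoc, sum_mul_weylTensor,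
    weylTensor_trace_left a hG hdet, Finset.sum_ite_eq', Finset.mem_univ, if_true, hG.apply ν μ]
  ring

theorem sum_christoffel_mul_weylTensor (hG : G.IsSymm) (hdet : IsUnit G.det)
    {Γ : ι → ι → ι → ℝ} (hΓ : ∀ l m n, Γ l m n = Γ l n m) (μ ν : ι) :
    ∑ l, ∑ c, (Γ l c ν * weylTensor G a c l μ + weylTensor G a l c ν * Γ c l μ
        - Γ l c l * weylTensor G a c ν μ - weylTensor G a l c l * Γ c ν μ)
      = ((∑ l, ∑ m, Γ l l m * (G⁻¹ *ᵥ a) m) * G ν μ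
          - ∑ l, (G⁻¹ *ᵥ a) l * (∑ s, Γ s l ν * G s μ + ∑ s, G ν s * Γ s l μ)) / 2
        - (Fintype.card ι / 2 - 1) * ∑ c, a c * Γ c ν μ := by
  have h1 : ∑ l, ∑ c, Γ l c ν * weylTensor G a c l μ
      = (∑ l, a l * Γ l μ ν + a μ * ∑ l, Γ l l ν
          - ∑ l, (∑ c, Γ l c ν * (G⁻¹ *ᵥ a) c) * G l μ) / 2 := by
    simp only [sum_mul_weylTensor, ← Finset.sum_div, Finset.sum_add_distrib, Finset.sum_sub_distrib,
      Finset.mul_sum, dotProduct]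
  have h2 : ∑ l, ∑ c, weylTensor G a l c ν * Γ c l μ
      = (∑ c, a c * Γ c ν μ + a ν * ∑ c, Γ c c μ
          - ∑ c, (∑ l, Γ c l μ * (G⁻¹ *ᵥ a) l) * G c ν) / 2 := by
    rw [Finset.sum_comm]
    simp only [mul_comm (weylTensor G a _ _ ν), sum_mul_weylTensor, ← Finset.sum_div,
      Finset.sum_add_distrib, Finset.sum_sub_distrib, Finset.mul_sum, dotProduct]
  have h3 : ∑ l, ∑ c, Γ l c l * weylTensor G a c ν μ
      = (a ν * ∑ l, Γ l μ l + a μ * ∑ l, Γ l ν l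
          - (∑ l, ∑ c, Γ l c l * (G⁻¹ *ᵥ a) c) * G ν μ) / 2 := by
    simp only [sum_mul_weylTensor, ← Finset.sum_div, Finset.sum_add_distrib, Finset.sum_sub_distrib,
      Finset.mul_sum, Finset.sum_mul, dotProduct]
  have h4 : ∑ l, ∑ c, weylTensor G a l c l * Γ c ν μ = Fintype.card ι / 2 * ∑ c, a c * Γ c ν μ := by
    rw [Finset.sum_comm]
    simp only [← Finset.sum_mul, weylTensor_trace_right a hG hdet, Finset.mul_sum, mul_assoc]
  have hlower1 : ∑ l, (∑ c, Γ l c ν * (G⁻¹ *ᵥ a) c) * G l μ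
      = ∑ l, (G⁻¹ *ᵥ a) l * ∑ s, Γ s l ν * G s μ := by
    simp only [Finset.sum_mul, Finset.mul_sum]
    rw [Finset.sum_comm]
    exact Finset.sum_congr rfl fun _ _ => Finset.sum_congr rfl fun _ _ => by ring
  have hlower2 : ∑ c, (∑ l, Γ c l μ * (G⁻¹ *ᵥ a) l) * G c ν
      = ∑ l, (G⁻¹ *ᵥ a) l * ∑ s, G ν s * Γ s l μ := by
    simp only [Finset.sum_mul, Finset.mul_sum]
    rw [Finset.sum_comm]
    exact Finset.sum_congr rfl fun _ _ => Finset.sum_congr rfl fun _ _ => by rw [hG.apply]; ring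
  have hswap : ∑ l, a l * Γ l μ ν = ∑ l, a l * Γ l ν μ :=
    Finset.sum_congr rfl fun l _ => by rw [hΓ]
  have htr (m : ι) : ∑ l, Γ l l m = ∑ l, Γ l m l := Finset.sum_congr rfl fun l _ => hΓ l l m
  have hcontr : ∑ l, ∑ c, Γ l c l * (G⁻¹ *ᵥ a) c = ∑ l, ∑ m, Γ l l m * (G⁻¹ *ᵥ a) m :=
    Finset.sum_congr rfl fun l _ => Finset.sum_congr rfl fun c _ => by rw [hΓ l c l]
  simp only [Finset.sum_add_distrib, Finset.sum_sub_distrib, h1, h2, h3, h4, hlower1, hlower2,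
    hswap, htr, hcontr, mul_add]
  ring

end WeylTensor

section LeviCivita

variable {g : (Fin 4 → ℝ) → Matrix (Fin 4) (Fin 4) ℝ} {x : Fin 4 → ℝ}

theorem pderiv4_metric_symm (hg_symm : ∀ y, (g y).IsSymm) (s m n : Fin 4) :
    pderiv4 s (fun y => g y m n) x = pderiv4 s (fun y => g y n m) x := by
  simp only [(hg_symm _).apply n m]

theorem christoffel_symm (hg_symm : ∀ y, (g y).IsSymm) (l m n : Fin 4) :
    christoffel g x l m n = christoffel g x l n m := by
  simp only [christoffel, pderiv4_metric_symm hg_symm _ m n]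
  congr 1
  exact Finset.sum_congr rfl fun σ _ => by ring

theorem sum_christoffel_mul_metric (hsymm : (g x).IsSymm) (hdet : IsUnit (g x).det)
    (a b c : Fin 4) :
    ∑ s, christoffel g x s a b * g x s c
      = (pderiv4 a (fun y => g y b c) x + pderiv4 b (fun y => g y a c) x
          - pderiv4 c (fun y => g y a b) x) / 2 := by
  have h := congrFun (hsymm.vecMul_inv_mulVec hdet fun σ => pderiv4 a (fun y => g y b σ) x
    + pderiv4 b (fun y => g y a σ) x - pderiv4 σ (fun y => g y a b) x) c
  simp only [vecMul, dotProduct] at h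
  simp only [christoffel, mul_assoc, ← Finset.mul_sum, mulVec, dotProduct] at h ⊢
  rw [h]
  ring

theorem pderiv4_metric (hg_symm : ∀ y, (g y).IsSymm) (hdet : IsUnit (g x).det) (l m n : Fin 4) :
    pderiv4 l (fun y => g y m n) x
      = ∑ s, christoffel g x s l m * g x s n + ∑ s, g x m s * christoffel g x s l n := by
  simp only [← (hg_symm x).apply m, mul_comm (g x _ m), sum_christoffel_mul_metric (hg_symm x) hdet]
  rw [pderiv4_metric_symm hg_symm l n m]
  ring

theorem pderiv4_inv_metric (hg_symm : ∀ y, (g y).IsSymm) (hg_unit : ∀ y, IsUnit (g y).det)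
    (hg : ∀ i j, Differentiable ℝ fun y => g y i j) (l i j : Fin 4) :
    pderiv4 l (fun y => (g y)⁻¹ i j) x
      = -(∑ k, (g x)⁻¹ i k * christoffel g x j l k + ∑ k, christoffel g x i l k * (g x)⁻¹ k j) := by
  set Γ : Matrix (Fin 4) (Fin 4) ℝ := Matrix.of fun s m => christoffel g x s l m
  have hcompat : pderivMatrix l g x = Γᵀ * g x + g x * Γ := by
    ext m n
    simp only [pderivMatrix, Matrix.of_apply, Matrix.add_apply, Matrix.mul_apply,
      Matrix.transpose_apply, Γ, pderiv4_metric hg_symm (hg_unit x)]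
  have hconj : (g x)⁻¹ * (Γᵀ * g x + g x * Γ) * (g x)⁻¹ = (g x)⁻¹ * Γᵀ + Γ * (g x)⁻¹ := by
    rw [Matrix.mul_add, Matrix.add_mul, Matrix.mul_assoc, Matrix.mul_assoc Γᵀ,
      mul_nonsing_inv _ (hg_unit x), Matrix.mul_one, ← Matrix.mul_assoc (g x)⁻¹ (g x),
      nonsing_inv_mul _ (hg_unit x), Matrix.one_mul]
  have hinv := congrFun (congrFun (pderivMatrix_inv hg hg_unit l x) i) j
  rw [hcompat, hconj] at hinv
  simpa only [pderivMatrix, Matrix.of_apply, Matrix.neg_apply, Matrix.add_apply, Matrix.mul_apply,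
    Matrix.transpose_apply, Γ] using hinv

end LeviCivita

section WeylConnection

variable {g : (Fin 4 → ℝ) → Matrix (Fin 4) (Fin 4) ℝ} {A : (Fin 4 → ℝ) → Fin 4 → ℝ}

theorem weylConn_eq_sub (hg_symm : ∀ y, (g y).IsSymm) (hg_unit : ∀ y, IsUnit (g y).det) :
    weylConn g A = christoffel g - fun y => weylTensor (g y) (A y) := by
  funext y l m n
  have hδ (k : Fin 4) : ∑ σ, (g y)⁻¹ l σ * g y k σ = if l = k then 1 else 0 := by
    simpa only [← (hg_symm y).apply k, Matrix.mul_apply, Matrix.one_apply] using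
      congrFun (congrFun (nonsing_inv_mul _ (hg_unit y)) l) k
  simp only [weylConn, weylTensor, Pi.sub_apply, mul_sub, mul_add, Finset.sum_add_distrib,
    Finset.sum_sub_distrib]
  simp only [mul_left_comm _ (A y m), mul_left_comm _ (A y n), ← mul_assoc ((g y)⁻¹ l _) (A y _),
    ← Finset.mul_sum, ← Finset.sum_mul, hδ, mulVec, dotProduct]
  ring

theorem differentiable_christoffel (hg_unit : ∀ y, IsUnit (g y).det)
    (hg : ∀ i j, ContDiff ℝ 2 fun y => g y i j) (l m n : Fin 4) :
    Differentiable ℝ fun y => christoffel g y l m n := by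
  have hinv := differentiable_inv_apply (fun i j => (hg i j).differentiable two_ne_zero) hg_unit
  have hdg (s i j : Fin 4) := (hg i j).differentiable_pderiv4 s
  unfold christoffel
  exact (Differentiable.fun_sum fun σ _ => (hinv l σ).mul
    (((hdg m n σ).add (hdg n m σ)).sub (hdg σ m n))).const_mul _

theorem differentiable_inv_mulVec (hg_unit : ∀ y, IsUnit (g y).det)
    (hg : ∀ i j, Differentiable ℝ fun y => g y i j) (hA : ∀ i, Differentiable ℝ fun y => A y i)
    (l : Fin 4) : Differentiable ℝ fun y => ((g y)⁻¹ *ᵥ A y) l := by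
  simp only [mulVec, dotProduct]
  exact Differentiable.fun_sum fun σ _ => (differentiable_inv_apply hg hg_unit l σ).fun_mul (hA σ)

theorem differentiable_weylTensor (hg_unit : ∀ y, IsUnit (g y).det)
    (hg : ∀ i j, Differentiable ℝ fun y => g y i j) (hA : ∀ i, Differentiable ℝ fun y => A y i)
    (l m n : Fin 4) : Differentiable ℝ fun y => weylTensor (g y) (A y) l m n := by
  have hB := differentiable_inv_mulVec hg_unit hg hA l
  unfold weylTensor
  fun_prop

theorem sum_pderiv4_inv_mulVec (hg_symm : ∀ y, (g y).IsSymm) (hg_unit : ∀ y, IsUnit (g y).det)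
    (hg : ∀ i j, Differentiable ℝ fun y => g y i j) (hA : ∀ i, Differentiable ℝ fun y => A y i)
    (x : Fin 4 → ℝ) :
    ∑ l, pderiv4 l (fun y => ((g y)⁻¹ *ᵥ A y) l) x
      = divA g A x - ∑ l, ∑ m, christoffel g x l l m * ((g x)⁻¹ *ᵥ A x) m := by
  have hderiv (l : Fin 4) : pderiv4 l (fun y => ((g y)⁻¹ *ᵥ A y) l) x
      = ∑ σ, (-(∑ k, (g x)⁻¹ l k * christoffel g x σ l k + ∑ k, christoffel g x l l k * (g x)⁻¹ k σ)
          * A x σ + (g x)⁻¹ l σ * pderiv4 l (fun y => A y σ) x) := by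
    have hinv := differentiable_inv_apply hg hg_unit
    simp only [mulVec, dotProduct]
    rw [pderiv4_sum fun σ _ => ((hinv l σ).fun_mul (hA σ)).differentiableAt]
    simp only [pderiv4_mul (hinv l _).differentiableAt (hA _).differentiableAt,
      pderiv4_inv_metric hg_symm hg_unit hg]
  simp only [hderiv]
  simp only [divA, covDerivA, mulVec, dotProduct, Fin.sum_univ_four]
  ring

theorem sum_pderiv4_weylTensor_trace (hg_symm : ∀ y, (g y).IsSymm)
    (hg_unit : ∀ y, IsUnit (g y).det) (hg : ∀ i j, Differentiable ℝ fun y => g y i j)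
    (hA : ∀ i, Differentiable ℝ fun y => A y i) (x : Fin 4 → ℝ) (μ ν : Fin 4) :
    ∑ l, pderiv4 ν (fun y => weylTensor (g y) (A y) l l μ) x
      = 2 * pderiv4 ν (fun y => A y μ) x := by
  have htrace : (fun y => ∑ l, weylTensor (g y) (A y) l l μ) = fun y => 2 * A y μ := by
    funext y
    rw [weylTensor_trace_left _ (hg_symm y) (hg_unit y), Fintype.card_fin]
    norm_num
  rw [← pderiv4_sum fun l _ => (differentiable_weylTensor hg_unit hg hA l l μ).differentiableAt,
    htrace, pderiv4_const_mul _ (hA μ).differentiableAt]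

theorem sum_pderiv4_weylTensor (hg_symm : ∀ y, (g y).IsSymm)
    (hg_unit : ∀ y, IsUnit (g y).det) (hg : ∀ i j, Differentiable ℝ fun y => g y i j)
    (hA : ∀ i, Differentiable ℝ fun y => A y i) (x : Fin 4 → ℝ) (μ ν : Fin 4) :
    ∑ l, pderiv4 l (fun y => weylTensor (g y) (A y) l ν μ) x
      = (pderiv4 μ (fun y => A y ν) x + pderiv4 ν (fun y => A y μ) x
          - (divA g A x - ∑ l, ∑ m, christoffel g x l l m * ((g x)⁻¹ *ᵥ A x) m) * g x ν μ
          - ∑ l, ((g x)⁻¹ *ᵥ A x) l * (∑ s, christoffel g x s l ν * g x s μ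
              + ∑ s, g x ν s * christoffel g x s l μ)) / 2 := by
  have hB := differentiable_inv_mulVec hg_unit hg hA
  have hderiv (l : Fin 4) : pderiv4 l (fun y => weylTensor (g y) (A y) l ν μ) x
      = (pderiv4 l (fun y => A y ν) x * (if l = μ then 1 else 0)
          + pderiv4 l (fun y => A y μ) x * (if l = ν then 1 else 0)
          - (pderiv4 l (fun y => ((g y)⁻¹ *ᵥ A y) l) x * g x ν μ
            + ((g x)⁻¹ *ᵥ A x) l * pderiv4 l (fun y => g y ν μ) x)) / 2 := by
    have h1 := ((hA ν).mul_const (if l = μ then (1 : ℝ) else 0)).differentiableAt (x := x)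
    have h2 := ((hA μ).mul_const (if l = ν then (1 : ℝ) else 0)).differentiableAt (x := x)
    have h3 := ((hB l).fun_mul (hg ν μ)).differentiableAt (x := x)
    unfold weylTensor
    rw [pderiv4_div_const _ ((h1.fun_add h2).fun_sub h3), pderiv4_sub (h1.fun_add h2) h3,
      pderiv4_add h1 h2, pderiv4_mul_const _ (hA ν).differentiableAt,
      pderiv4_mul_const _ (hA μ).differentiableAt,
      pderiv4_mul (hB l).differentiableAt (hg ν μ).differentiableAt]
  simp only [hderiv, ← Finset.sum_div, Finset.sum_add_distrib, Finset.sum_sub_distrib, mul_ite,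
    mul_one, mul_zero, Finset.sum_ite_eq', Finset.mem_univ, if_true, ← Finset.sum_mul,
    sum_pderiv4_inv_mulVec hg_symm hg_unit hg hA, pderiv4_metric hg_symm (hg_unit x)]
  ring

theorem normSqA_eq_dotProduct (x : Fin 4 → ℝ) :
    normSqA g A x = A x ⬝ᵥ ((g x)⁻¹ *ᵥ A x) := by
  simp only [normSqA, dotProduct, mulVec, Finset.mul_sum]
  exact Finset.sum_congr rfl fun _ _ => Finset.sum_congr rfl fun _ _ => by ring

theorem covDerivA_add_covDerivA (hg_symm : ∀ y, (g y).IsSymm) (x : Fin 4 → ℝ) (μ ν : Fin 4) :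
    covDerivA g A x μ ν + covDerivA g A x ν μ
      = pderiv4 μ (fun y => A y ν) x + pderiv4 ν (fun y => A y μ) x
        - 2 * ∑ c, A x c * christoffel g x c ν μ := by
  simp only [covDerivA, christoffel_symm hg_symm _ μ ν, mul_comm (christoffel g x _ ν μ)]
  ring

end WeylConnection

/-- Relation between the Ricci tensor of the Weyl connection and that of the
Levi–Civita connection (abelian case), with `F_{μν} = ∂_μ A_ν − ∂_ν A_μ` and
`E_{μν} = ∇_μ A_ν + ∇_ν A_μ + 4 A_μ A_ν`:
`Ric[Γ̄]_{μν} = Ric[Γ]_{μν} + ½ g_{μν} (∇^λ A_λ − A^λ A_λ)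
− (3/2) A_μ A_ν − F_{μν} + ½ E_{μν}`. -/
theorem weyl_ricci_tensor (g : (Fin 4 → ℝ) → Matrix (Fin 4) (Fin 4) ℝ)
    (A : (Fin 4 → ℝ) → Fin 4 → ℝ)
    (hg_symm : ∀ x, (g x).IsSymm) (hg_unit : ∀ x, IsUnit (g x).det)
    (hg_smooth : ∀ μ ν, ContDiff ℝ 2 fun x => g x μ ν)
    (hA_smooth : ∀ μ, ContDiff ℝ 1 fun x => A x μ) :
    ∀ (x : Fin 4 → ℝ) (μ ν : Fin 4),
      ricci (weylConn g A) x μ ν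
        = ricci (christoffel g) x μ ν
          + (1 / 2) * g x μ ν * (divA g A x - normSqA g A x)
          - (3 / 2) * (A x μ * A x ν)
          - (pderiv4 μ (fun y => A y ν) x - pderiv4 ν (fun y => A y μ) x)
          + (1 / 2) * (covDerivA g A x μ ν + covDerivA g A x ν μ
              + 4 * (A x μ * A x ν)) := by
  intro x μ ν
  have hg (i j : Fin 4) := (hg_smooth i j).differentiable two_ne_zero
  have hA (i : Fin 4) := (hA_smooth i).differentiable one_ne_zero
  rw [weylConn_eq_sub hg_symm hg_unit,
    ricci_sub (fun l m n => (differentiable_christoffel hg_unit hg_smooth l m n).differentiableAt)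
      (fun l m n => (differentiable_weylTensor hg_unit hg hA l m n).differentiableAt),
    sum_pderiv4_weylTensor_trace hg_symm hg_unit hg hA,
    sum_pderiv4_weylTensor hg_symm hg_unit hg hA,
    sum_christoffel_mul_weylTensor _ (hg_symm x) (hg_unit x) (christoffel_symm hg_symm),
    sum_weylTensor_mul_weylTensor _ (hg_symm x) (hg_unit x), Fintype.card_fin,
    normSqA_eq_dotProduct, covDerivA_add_covDerivA hg_symm, (hg_symm x).apply μ ν]
  ring
end
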